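/- arXiv:2202.00947 — 2 statements merged into one kernel-verified Lean document; each statement's English description precedes it below -/
import Mathlib

section
/- Let Y be a closed subspace of a real Banach space X. If Y has property-(wU) in X (every norm-attaining functional on Y has a unique norm-preserving extension to X), then for every x* ∈ X* attaining its norm at some point of S_Y, the zero functional is the unique best approximation to x* from Y⊥. -/
open NormedSpace Metric Set

namespace Paper

variable {X : Type*} [NormedAddCommGroup X] [NormedSpace ℝ X]

/-- The restriction of a continuous linear functional to a subspace. -/
noncomputable def restr (Y : Submodule ℝ X) (f : StrongDual ℝ X) : StrongDual ℝ ↥Y :=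
  f.comp Y.subtypeL

/-- The annihilator `Y⊥` of a subspace `Y` in the dual. -/
def ann (Y : Submodule ℝ X) : Set (StrongDual ℝ X) := {f | ∀ y ∈ Y, f y = 0}

/-- The set of norm-preserving (Hahn–Banach) extensions of `g : Y* ` to `X`. -/
def HB (Y : Submodule ℝ X) (g : StrongDual ℝ ↥Y) : Set (StrongDual ℝ X) :=
  {f | (∀ y : Y, f (y : X) = g y) ∧ ‖f‖ = ‖g‖}

/-- Best approximations to `x` from a set `A`. -/
def bestApprox {E : Type*} [NormedAddCommGroup E] (A : Set E) (x : E) : Set E :=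
  {z ∈ A | ‖x - z‖ = infDist x A}

/-- Property-(U): every functional on `Y` has a unique norm-preserving extension to `X`. -/
def propU (Y : Submodule ℝ X) : Prop :=
  ∀ g : StrongDual ℝ ↥Y, ∃! f : StrongDual ℝ X, f ∈ HB Y g

/-- `Y# `: the set of functionals whose norm equals the norm of their restriction to `Y`. -/
def sharp (Y : Submodule ℝ X) : Set (StrongDual ℝ X) := {f | ‖f‖ = ‖restr Y f‖}

/-- Property-(HB), stated via the decomposition `X* = Y# ⊕ Y⊥`. -/
def propHB (Y : Submodule ℝ X) : Prop :=
  (∀ f ∈ sharp Y, ∀ g ∈ sharp Y, f + g ∈ sharp Y) ∧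
  (∀ (c : ℝ), ∀ f ∈ sharp Y, c • f ∈ sharp Y) ∧
  (∀ f : StrongDual ℝ X, ∃ g ∈ sharp Y, ∃ h ∈ ann Y, f = g + h) ∧
  (∀ g ∈ sharp Y, ∀ h ∈ ann Y, h ≠ 0 → ‖g‖ < ‖g + h‖ ∧ ‖h‖ ≤ ‖g + h‖)

end Paper

open Paper

/-! Best approximations to `f` from `Y⊥` are exactly the `z` for which `f - z` is a norm-preserving
extension of `f|Y`: by Hahn–Banach the distance from `f` to `Y⊥` is `‖f|Y‖`. So when `f` attains
its norm on `S_Y`, `f` is itself such an extension (giving `z = 0`), and property-(wU) applied to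
`f|Y`, which attains its norm at the same point, leaves no other. -/

namespace Paper

variable {X : Type*} [NormedAddCommGroup X] [NormedSpace ℝ X] {Y : Submodule ℝ X}
  {f z : StrongDual ℝ X}

@[simp]
theorem restr_apply (Y : Submodule ℝ X) (f : StrongDual ℝ X) (y : Y) : restr Y f y = f y := rfl

theorem zero_mem_ann (Y : Submodule ℝ X) : (0 : StrongDual ℝ X) ∈ ann Y := fun _ _ => rfl

theorem restr_sub_of_mem_ann (hz : z ∈ ann Y) : restr Y (f - z) = restr Y f := by
  ext y
  simp [hz y y.2]

theorem norm_restr_le (Y : Submodule ℝ X) (f : StrongDual ℝ X) : ‖restr Y f‖ ≤ ‖f‖ :=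
  ContinuousLinearMap.opNorm_le_bound _ (norm_nonneg f) fun y => f.le_opNorm y

theorem norm_restr_eq_of_apply_eq_norm {y₀ : Y} (hy₀ : ‖(y₀ : X)‖ = 1) (hf : f y₀ = ‖f‖) :
    ‖restr Y f‖ = ‖f‖ := by
  refine le_antisymm (norm_restr_le Y f) ?_
  calc ‖f‖ = restr Y f y₀ := hf.symm
    _ ≤ ‖restr Y f y₀‖ := le_abs_self _
    _ ≤ ‖restr Y f‖ * ‖(y₀ : X)‖ := (restr Y f).le_opNorm y₀
    _ = ‖restr Y f‖ := by rw [hy₀, mul_one]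

theorem mem_HB_restr_self (hf : ‖restr Y f‖ = ‖f‖) : f ∈ HB Y (restr Y f) :=
  ⟨fun _ => rfl, hf.symm⟩

theorem sub_mem_ann_of_mem_HB {F : StrongDual ℝ X} (hF : F ∈ HB Y (restr Y f)) :
    f - F ∈ ann Y := fun y hy => by
  simp [hF.1 ⟨y, hy⟩]

theorem infDist_ann_eq_norm_restr (Y : Submodule ℝ X) (f : StrongDual ℝ X) :
    infDist f (ann Y) = ‖restr Y f‖ := by
  refine le_antisymm ?_ ((le_infDist ⟨0, zero_mem_ann Y⟩).2 fun z hz => ?_)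
  · obtain ⟨F, hFY, hFnorm⟩ := exists_extension_norm_eq Y (restr Y f)
    calc infDist f (ann Y) ≤ dist f (f - F) :=
          infDist_le_dist_of_mem (sub_mem_ann_of_mem_HB ⟨hFY, hFnorm⟩)
      _ = ‖restr Y f‖ := by rw [dist_eq_norm, sub_sub_cancel, hFnorm]
  · rw [dist_eq_norm, ← restr_sub_of_mem_ann hz]
    exact norm_restr_le Y (f - z)

theorem mem_bestApprox_ann_iff :
    z ∈ bestApprox (ann Y) f ↔ f - z ∈ HB Y (restr Y f) := by
  rw [bestApprox, mem_sep_iff, infDist_ann_eq_norm_restr]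
  constructor
  · rintro ⟨hz, hnorm⟩
    exact ⟨fun y => by simp [hz y y.2], hnorm⟩
  · intro hfz
    have hz : z ∈ ann Y := by simpa using sub_mem_ann_of_mem_HB hfz
    exact ⟨hz, hfz.2⟩

end Paper

theorem stmt1_general {X : Type*} [NormedAddCommGroup X] [NormedSpace ℝ X]
    (Y : Submodule ℝ X)
    (h : ∀ g : StrongDual ℝ ↥Y, (∃ y : Y, ‖(y : X)‖ = 1 ∧ g y = ‖g‖) →
      ∃! f : StrongDual ℝ X, f ∈ HB Y g) :
    ∀ f : StrongDual ℝ X, (∃ y : Y, ‖(y : X)‖ = 1 ∧ f (y : X) = ‖f‖) →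
      bestApprox (ann Y) f = {0} := by
  rintro f ⟨y₀, hy₀, hfy₀⟩
  have hnorm := norm_restr_eq_of_apply_eq_norm hy₀ hfy₀
  obtain ⟨F, -, huniq⟩ := h (restr Y f) ⟨y₀, hy₀, by rw [hnorm]; exact hfy₀⟩
  have hf : f = F := huniq f (mem_HB_restr_self hnorm)
  ext z
  rw [mem_bestApprox_ann_iff, mem_singleton_iff]
  constructor
  · intro hz
    simpa [← hf] using huniq _ hz
  · rintro rfl
    simpa using mem_HB_restr_self hnorm

/-- if `Y` has property-(wU) in `X`, then for every `x* ∈ X*` attaining its norm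
at a point of `S_Y`, the zero functional is its unique best approximation from `Y⊥`. -/
theorem stmt1 {X : Type*} [NormedAddCommGroup X] [NormedSpace ℝ X] [CompleteSpace X]
    (Y : Submodule ℝ X) (hYc : IsClosed (Y : Set X))
    (h : ∀ g : StrongDual ℝ ↥Y, (∃ y : Y, ‖(y : X)‖ = 1 ∧ g y = ‖g‖) →
      ∃! f : StrongDual ℝ X, f ∈ HB Y g) :
    ∀ f : StrongDual ℝ X, (∃ y : Y, ‖(y : X)‖ = 1 ∧ f (y : X) = ‖f‖) →
      bestApprox (ann Y) f = {0} :=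
  stmt1_general Y h
end

section
/- Let Z ⊆ Y ⊆ X be closed subspaces of a real Banach space X. If Z has property-(HB) in X, then Z has property-(HB) in Y. -/
/-!
By Hahn–Banach every `f ∈ Y*` is the restriction of some `F ∈ X*` with `‖F‖ = ‖f‖`, and
`G ∈ X*` lies in `Z#` computed in `X` iff `G|_Y` lies in `Z#` computed in `Y` and `‖G|_Y‖ = ‖G‖`.
Extending to `X`, decomposing there and restricting back therefore transfers the linearity of `Z#`
and the decomposition `Y* = Z# + Z⊥`. Since `Z# ∩ Z⊥ = 0`, that decomposition is unique once `Z#`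
is linear, so the decomposition of `g + h` is the restriction of the decomposition of a
norm-preserving extension of `g + h`, and the norm inequalities in `X*` pass down to `Y*`.
-/

open NormedSpace Metric Set

open Paper

namespace Paper

section Subspace

variable {E : Type*} [NormedAddCommGroup E] [NormedSpace ℝ E] (W : Submodule ℝ E)

lemma restr_add (f g : StrongDual ℝ E) : restr W (f + g) = restr W f + restr W g := rfl

lemma restr_smul (c : ℝ) (f : StrongDual ℝ E) : restr W (c • f) = c • restr W f := rfl

lemma norm_restr_le_s11 (f : StrongDual ℝ E) : ‖restr W f‖ ≤ ‖f‖ :=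
  ContinuousLinearMap.opNorm_le_bound _ (norm_nonneg f) fun w => f.le_opNorm w

lemma exists_restr_eq_norm_eq (g : StrongDual ℝ W) :
    ∃ f : StrongDual ℝ E, restr W f = g ∧ ‖f‖ = ‖g‖ := by
  obtain ⟨f, hfg, hf⟩ := exists_extension_norm_eq W g
  exact ⟨f, ContinuousLinearMap.ext hfg, hf⟩

lemma smul_mem_sharp (c : ℝ) {f : StrongDual ℝ E} (hf : f ∈ sharp W) : c • f ∈ sharp W := by
  show ‖c • f‖ = ‖restr W (c • f)‖
  -- instance search does not find this for the dual of a submodule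
  have : NormSMulClass ℝ (StrongDual ℝ W) :=
    @NormedSpace.toNormSMulClass ℝ (StrongDual ℝ W) _ _ _
  rw [restr_smul, norm_smul, norm_smul, ← hf]

lemma eq_zero_of_mem_sharp_of_mem_ann {f : StrongDual ℝ E} (hs : f ∈ sharp W)
    (ha : f ∈ ann W) : f = 0 := by
  have hr : restr W f = 0 := ContinuousLinearMap.ext fun w => ha w w.2
  rw [← norm_eq_zero, hs, hr]
  exact ContinuousLinearMap.opNorm_zero

lemma eq_of_add_eq_add_of_mem_sharp
    (hadd : ∀ f ∈ sharp W, ∀ g ∈ sharp W, f + g ∈ sharp W)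
    {g g' h h' : StrongDual ℝ E} (hg : g ∈ sharp W) (hg' : g' ∈ sharp W)
    (hh : h ∈ ann W) (hh' : h' ∈ ann W) (heq : g + h = g' + h') : g = g' := by
  have hs : g - g' ∈ sharp W := by
    rw [sub_eq_add_neg, ← neg_one_smul ℝ g']
    exact hadd g hg _ (smul_mem_sharp W (-1) hg')
  have ha : g - g' ∈ ann W := fun x hx => by
    have := congrArg (fun φ : StrongDual ℝ E => φ x) heq
    simp only [add_apply, hh x hx, hh' x hx, add_zero] at this
    simp [this]
  exact sub_eq_zero.mp (eq_zero_of_mem_sharp_of_mem_ann W hs ha)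

end Subspace

section Tower

variable {X : Type*} [NormedAddCommGroup X] [NormedSpace ℝ X]
  {Y : Submodule ℝ X} {Z : Submodule ℝ Y}

lemma norm_restr_map_subtype (F : StrongDual ℝ X) :
    ‖restr (Z.map Y.subtype) F‖ = ‖restr Z (restr Y F)‖ := by
  apply le_antisymm
  · refine ContinuousLinearMap.opNorm_le_bound _ (ContinuousLinearMap.opNorm_nonneg _) ?_
    rintro ⟨_, z, hz, rfl⟩
    exact (restr Z (restr Y F)).le_opNorm ⟨z, hz⟩
  · refine ContinuousLinearMap.opNorm_le_bound _ (ContinuousLinearMap.opNorm_nonneg _) fun z => ?_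
    exact (restr (Z.map Y.subtype) F).le_opNorm ⟨z, z, z.2, rfl⟩

lemma mem_sharp_map_subtype_iff {G : StrongDual ℝ X} :
    G ∈ sharp (Z.map Y.subtype) ↔ restr Y G ∈ sharp Z ∧ ‖restr Y G‖ = ‖G‖ := by
  change ‖G‖ = ‖restr _ G‖ ↔ ‖restr Y G‖ = ‖restr Z (restr Y G)‖ ∧ _
  rw [norm_restr_map_subtype]
  constructor
  · intro hG
    have hY : ‖restr Y G‖ = ‖G‖ :=
      le_antisymm (norm_restr_le_s11 Y G) (hG ▸ norm_restr_le_s11 Z (restr Y G))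
    exact ⟨hY.trans hG, hY⟩
  · rintro ⟨hZ, hY⟩
    rw [← hY, hZ]

lemma restr_mem_ann_of_mem_ann_map_subtype {H : StrongDual ℝ X}
    (hH : H ∈ ann (Z.map Y.subtype)) : restr Y H ∈ ann Z :=
  fun z hz => hH z ⟨z, hz, rfl⟩

variable (hHB : propHB (Z.map Y.subtype))
include hHB

lemma add_mem_sharp_of_propHB_map {f g : StrongDual ℝ Y} (hf : f ∈ sharp Z)
    (hg : g ∈ sharp Z) : f + g ∈ sharp Z := by
  obtain ⟨F, rfl, hFn⟩ := exists_restr_eq_norm_eq Y f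
  obtain ⟨G, rfl, hGn⟩ := exists_restr_eq_norm_eq Y g
  have hFG := hHB.1 F (mem_sharp_map_subtype_iff.2 ⟨hf, hFn.symm⟩)
    G (mem_sharp_map_subtype_iff.2 ⟨hg, hGn.symm⟩)
  exact (mem_sharp_map_subtype_iff.1 hFG).1

lemma exists_decomposition_of_propHB_map (f : StrongDual ℝ Y) :
    ∃ G ∈ sharp (Z.map Y.subtype), ∃ H ∈ ann (Z.map Y.subtype),
      restr Y G + restr Y H = f ∧ ‖G + H‖ = ‖f‖ := by
  obtain ⟨F, rfl, hFn⟩ := exists_restr_eq_norm_eq Y f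
  obtain ⟨G, hG, H, hH, rfl⟩ := hHB.2.2.1 F
  exact ⟨G, hG, H, hH, (restr_add Y G H).symm, hFn⟩

lemma norm_lt_and_le_of_propHB_map {g h : StrongDual ℝ Y} (hg : g ∈ sharp Z)
    (hh : h ∈ ann Z) (hne : h ≠ 0) : ‖g‖ < ‖g + h‖ ∧ ‖h‖ ≤ ‖g + h‖ := by
  obtain ⟨G, hG, H, hH, hsum, hnorm⟩ := exists_decomposition_of_propHB_map hHB (g + h)
  obtain ⟨hGZ, hGn⟩ := mem_sharp_map_subtype_iff.1 hG
  have hgG : g = restr Y G :=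
    eq_of_add_eq_add_of_mem_sharp Z (fun _ hf _ hf' => add_mem_sharp_of_propHB_map hHB hf hf')
      hg hGZ hh (restr_mem_ann_of_mem_ann_map_subtype hH) hsum.symm
  have hhH : h = restr Y H := by
    rw [hgG] at hsum
    exact (add_left_cancel hsum).symm
  have hH0 : H ≠ 0 := by
    rintro rfl
    exact hne hhH
  obtain ⟨hlt, hle⟩ := hHB.2.2.2 G hG H hH hH0
  rw [hnorm] at hlt hle
  constructor
  · calc ‖g‖ = ‖G‖ := by rw [hgG, hGn]
      _ < ‖g + h‖ := hlt
  · calc ‖h‖ = ‖restr Y H‖ := by rw [hhH]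
      _ ≤ ‖H‖ := norm_restr_le_s11 Y H
      _ ≤ ‖g + h‖ := hle

end Tower

end Paper

theorem stmt11_general {X : Type*} [NormedAddCommGroup X] [NormedSpace ℝ X]
    (Y : Submodule ℝ X)
    (Z : Submodule ℝ ↥Y)
    (hHB : propHB (Z.map Y.subtype)) :
    propHB Z := by
  refine ⟨fun f hf g hg => add_mem_sharp_of_propHB_map hHB hf hg,
    fun c f hf => smul_mem_sharp Z c hf, fun f => ?_,
    fun g hg h hh hne => norm_lt_and_le_of_propHB_map hHB hg hh hne⟩
  obtain ⟨G, hG, H, hH, hsum, -⟩ := exists_decomposition_of_propHB_map hHB f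
  exact ⟨restr Y G, (mem_sharp_map_subtype_iff.1 hG).1, restr Y H,
    restr_mem_ann_of_mem_ann_map_subtype hH, hsum.symm⟩

/-- if `Z ⊆ Y ⊆ X` are closed subspaces and `Z` has property-(HB) in `X`,
then `Z` has property-(HB) in `Y`. -/
theorem stmt11 {X : Type*} [NormedAddCommGroup X] [NormedSpace ℝ X] [CompleteSpace X]
    (Y : Submodule ℝ X) (hYc : IsClosed (Y : Set X))
    (Z : Submodule ℝ ↥Y) (hZc : IsClosed (Z : Set ↥Y))
    (hHB : propHB (Z.map Y.subtype)) :
    propHB Z :=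
  stmt11_general Y Z hHB
end
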